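/- Let (M_i)_{i∈I} be a family of connected partial linear spaces with correlations φ_i of M_i onto M_{i+1}, and write M₀ for the structure M_0 of the family. (i) If I = ℤ then ⊛_{i∈I}(M_i, φ_i) is isomorphic to ⊛_ℤ(∘, M₀). (ii) If I = C_k with k even and φ_{k−1} ∘ ⋯ ∘ φ_1 ∘ φ_0 = id, then ⊛_{i∈I}(M_i, φ_i) is isomorphic to ⊛_{C_k}(∘, M₀). -/

import Mathlib

/-!
Let `σ` be the permutation of the disjoint union of all the `M_i` that applies `φ_i` to the
elements of `M_i`: it moves index `i` to `i + 1`, exchanges points and lines, and preserves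
incidence inside a fibre. Transporting `M₀` along the powers of `σ` identifies `I × (S₀ ⊔ L₀)`
with all elements of the glued structure; for `I = C_k` this is well defined because `σ^k` is
the identity on `M₀`, which is the hypothesis `φ_{k-1} ∘ ⋯ ∘ φ_0 = id`. Under this
identification incidence inside `M_i` becomes incidence in `M₀`, the glueing incidence through
`φ_j` becomes `(j + 1, x) I [j, x]`, and `(i, x)` is a point exactly when `x` is a point of
`M₀` and `i` is even or `x` is a line and `i` is odd; this is `⊛_I(∘, M₀)`.
-/

/-- A partial linear space: every line has at least two points, every point is on
at least two lines, and two distinct points are on at most one common line. -/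
def IsPLS {P L : Type*} (inc : P → L → Prop) : Prop :=
  (∀ l, ∃ a b, a ≠ b ∧ inc a l ∧ inc b l) ∧
  (∀ a, ∃ l m, l ≠ m ∧ inc a l ∧ inc a m) ∧
  (∀ a b l m, inc a l → inc b l → inc a m → inc b m → a = b ∨ l = m)

/-- An isomorphism of incidence structures. -/
structure IncIso {P₁ L₁ P₂ L₂ : Type*} (inc₁ : P₁ → L₁ → Prop) (inc₂ : P₂ → L₂ → Prop) where
  pt : P₁ ≃ P₂
  ln : L₁ ≃ L₂
  pres : ∀ a l, inc₁ a l ↔ inc₂ (pt a) (ln l)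

/-- A correlation of one incidence structure onto another: a pair of bijections,
points to lines and lines to points, reversing incidence. -/
structure Correlation {P₀ L₀ P₁ L₁ : Type*} (inc₀ : P₀ → L₀ → Prop) (inc₁ : P₁ → L₁ → Prop) where
  toLines : P₀ ≃ L₁
  toPoints : L₀ ≃ P₁
  rev : ∀ a l, inc₀ a l ↔ inc₁ (toPoints l) (toLines a)

/-- A closed substructure. -/
def IsClosedSub {P L : Type*} (inc : P → L → Prop) (B' : Set P) (B'' : Set L) : Prop :=
  (∀ a₁ a₂ l, a₁ ∈ B' → a₂ ∈ B' → a₁ ≠ a₂ → inc a₁ l → inc a₂ l → l ∈ B'') ∧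
  (∀ l₁ l₂ a, l₁ ∈ B'' → l₂ ∈ B'' → l₁ ≠ l₂ → inc a l₁ → inc a l₂ → a ∈ B')

/-- One incidence step (within a substructure) between elements (points or lines). -/
def IncStep {P L : Type*} (inc : P → L → Prop) (B' : Set P) (B'' : Set L) :
    (P ⊕ L) → (P ⊕ L) → Prop :=
  fun x y => ∃ a l, a ∈ B' ∧ l ∈ B'' ∧ inc a l ∧
    ((x = Sum.inl a ∧ y = Sum.inr l) ∨ (x = Sum.inr l ∧ y = Sum.inl a))

/-- Connectivity of a substructure: any two of its elements are joined by a finite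
chain of incidences within it. -/
def SubConnected {P L : Type*} (inc : P → L → Prop) (B' : Set P) (B'' : Set L) : Prop :=
  ∀ x y : P ⊕ L, Sum.elim (· ∈ B') (· ∈ B'') x → Sum.elim (· ∈ B') (· ∈ B'') y →
    Relation.ReflTransGen (IncStep inc B' B'') x y

/-- Connectivity of the whole incidence structure. -/
def ConnectedPLS {P L : Type*} (inc : P → L → Prop) : Prop :=
  SubConnected inc Set.univ Set.univ

/-- Collinearity of two points. -/
def Collin {P L : Type*} (inc : P → L → Prop) (a b : P) : Prop := ∃ l, inc a l ∧ inc b l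

/-- A triangle: three pairwise collinear points which are not on a common line. -/
def IsTriangle {P L : Type*} (inc : P → L → Prop) (a b c : P) : Prop :=
  a ≠ b ∧ b ≠ c ∧ a ≠ c ∧ Collin inc a b ∧ Collin inc b c ∧ Collin inc a c ∧
    ¬ ∃ l, inc a l ∧ inc b l ∧ inc c l

/-- The Shult axiom (Γ-space). -/
def Shultenian {P L : Type*} (inc : P → L → Prop) : Prop :=
  ∀ a b c d l, IsTriangle inc a b c → inc a l → inc b l → inc d l → Collin inc d c

/-- Degree of a point: the number of lines through it. -/
noncomputable def ptDeg {P L : Type*} (inc : P → L → Prop) (p : P) : ℕ :=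
  Set.ncard {l | inc p l}

/-- Size of a line: the number of points on it. -/
noncomputable def lnSize {P L : Type*} (inc : P → L → Prop) (l : L) : ℕ :=
  Set.ncard {p | inc p l}

/-- `G` is a cyclic group (with distinguished generator `1`) which is either
infinite or of even order greater than `2`. -/
def GoodGroup (G : Type*) [CommRing G] : Prop :=
  Nonempty (G ≃+* ℤ) ∨ ∃ k : ℕ, 2 < k ∧ Even k ∧ Nonempty (G ≃+* ZMod k)

/-- `I` is (as a cyclic group with generator `1`) either `ℤ` or `C_k`. -/
def CyclicIndex (I : Type*) [CommRing I] : Prop :=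
  Nonempty (I ≃+* ℤ) ∨ ∃ k : ℕ, 0 < k ∧ Nonempty (I ≃+* ZMod k)

/-- Incidence on the disjoint union `S ⊕ L`, in either direction. -/
def dualInc {S L : Type*} (inc0 : S → L → Prop) : (S ⊕ L) → (S ⊕ L) → Prop
  | Sum.inl a, Sum.inr b => inc0 a b
  | Sum.inr b, Sum.inl a => inc0 a b
  | _, _ => False

/-- Points of the multiplied structure `⊛_G(∘, M₀)`. -/
def starPt (G : Type*) [CommRing G] (S L : Type*) : Set (G × (S ⊕ L)) :=
  {p | (Even p.1 ∧ ∃ a : S, p.2 = Sum.inl a) ∨ (¬ Even p.1 ∧ ∃ l : L, p.2 = Sum.inr l)}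

/-- Lines of the multiplied structure `⊛_G(∘, M₀)`. -/
def starLn (G : Type*) [CommRing G] (S L : Type*) : Set (G × (S ⊕ L)) :=
  {q | (Even q.1 ∧ ∃ l : L, q.2 = Sum.inr l) ∨ (¬ Even q.1 ∧ ∃ a : S, q.2 = Sum.inl a)}

/-- Incidence of the multiplied structure `⊛_G(∘, M₀)`:
`(i,a) I [j,b]` iff (`i = j` and `a I₀ b` or `b I₀ a`) or (`i = j + 1` and `a = b`). -/
def starInc (G : Type*) [CommRing G] {S L : Type*} (inc0 : S → L → Prop) :
    ↥(starPt G S L) → ↥(starLn G S L) → Prop :=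
  fun p l => (p.val.1 = l.val.1 ∧ dualInc inc0 p.val.2 l.val.2) ∨
    (p.val.1 = l.val.1 + 1 ∧ p.val.2 = l.val.2)

/-- The relation `⊹` on `⊛_G(∘, M₀)`: `p ⊹ l` iff `p I l` and `i = j + 1`. -/
def starDod (G : Type*) [CommRing G] {S L : Type*} (inc0 : S → L → Prop)
    (p : ↥(starPt G S L)) (l : ↥(starLn G S L)) : Prop :=
  starInc G inc0 p l ∧ p.val.1 = l.val.1 + 1

/-- The relation `⊹₁`. -/
def dod1 {P L : Type*} (inc : P → L → Prop) (p : P) (l : L) : Prop :=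
  inc p l ∧ ∃ q, q ≠ p ∧ inc q l ∧ ∀ k m n, l ≠ k → l ≠ m → l ≠ n → m ≠ n →
    inc q k → inc p m → inc p n → (∃ x, inc x k ∧ inc x m) → ¬ ∃ x, inc x k ∧ inc x n

/-- The relation `◁`: `a ◁ l` iff `a` is not on `l` and there is exactly one line
through `a` missing `l`. -/
def corrRel {P L : Type*} (inc : P → L → Prop) (a : P) (l : L) : Prop :=
  ¬ inc a l ∧ ∃! m, inc a m ∧ ¬ ∃ x, inc x l ∧ inc x m

/-- The relation `⊹₂`. -/
def dod2 {P L : Type*} (inc : P → L → Prop) (p : P) (l : L) : Prop :=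
  inc p l ∧ ∃ a, ¬ Collin inc p a ∧ corrRel inc a l

/-- The family `{B_i}` is a covering of the structure by connected closed
substructures satisfying conditions (1)-(7). -/
def GoodCover {P L I : Type*} (inc : P → L → Prop) (B' : I → Set P) (B'' : I → Set L) : Prop :=
  (∀ p, ∃ i, p ∈ B' i) ∧ (∀ l, ∃ i, l ∈ B'' i) ∧
  (∀ i, IsClosedSub inc (B' i) (B'' i)) ∧
  (∀ i, SubConnected inc (B' i) (B'' i)) ∧
  (∀ i₁ i₂, (B' i₁ ∩ B' i₂).Nonempty → B' i₁ = B' i₂) ∧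
  (∀ i₁ i₂, (B'' i₁ ∩ B'' i₂).Nonempty → B'' i₁ = B'' i₂) ∧
  (∀ i, ∀ d ∈ B' i, ∃ m, inc d m ∧ m ∉ B'' i) ∧
  (∀ i, ∀ m ∈ B'' i, ∃ d, inc d m ∧ d ∉ B' i) ∧
  (∀ i, IsClosedSub inc (B' i)ᶜ (B'' i)ᶜ) ∧
  (∀ (i : I) (p : P) (m₁ m₂ m₃ : L) (d₁ d₂ d₃ : P),
    inc p m₁ → inc p m₂ → inc p m₃ → inc d₁ m₁ → inc d₂ m₂ → inc d₃ m₃ →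
    m₁ ∈ B'' i → m₂ ∈ B'' i → m₃ ∈ B'' i → d₁ ∉ B' i → d₂ ∉ B' i → d₃ ∉ B' i →
    ∃ n, inc d₁ n ∧ inc d₂ n ∧ inc d₃ n) ∧
  (∀ (i : I) (n : L) (d₁ d₂ d₃ : P) (m₁ m₂ m₃ : L),
    inc d₁ n → inc d₂ n → inc d₃ n → inc d₁ m₁ → inc d₂ m₂ → inc d₃ m₃ →
    d₁ ∈ B' i → d₂ ∈ B' i → d₃ ∈ B' i → m₁ ∉ B'' i → m₂ ∉ B'' i → m₃ ∉ B'' i →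
    ∃ q, inc q m₁ ∧ inc q m₂ ∧ inc q m₃)

/-- The relation `ρ` on the index set: `j ρ i` iff `j ≠ i` and some line of `B''_j`
is incident with some point of `B'_i`. -/
def rhoRel {P L I : Type*} (inc : P → L → Prop) (B' : I → Set P) (B'' : I → Set L)
    (j i : I) : Prop :=
  j ≠ i ∧ ∃ l ∈ B'' j, ∃ a ∈ B' i, inc a l

/-- The relation `⊹` determined by a covering: `a ⊹ m` iff `a I m` and no member of
the covering contains both `a` and `m`. -/
def dodRel {P L I : Type*} (inc : P → L → Prop) (B' : I → Set P) (B'' : I → Set L)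
    (a : P) (m : L) : Prop :=
  inc a m ∧ ¬ ∃ i, a ∈ B' i ∧ m ∈ B'' i

/-- Incidence of the structure `⊛_{i∈I}(M_i, φ_i)` obtained by glueing the family
`(M_i)` along the correlations `φ_i`. -/
def glueInc {I : Type*} [CommRing I] {P Lf : I → Type*} (inc : ∀ i, P i → Lf i → Prop)
    (φ : ∀ i, Correlation (inc i) (inc (i + 1))) :
    (Σ i, P i) → (Σ i, Lf i) → Prop :=
  fun p l => (∃ (i : I) (a : P i) (m : Lf i), p = ⟨i, a⟩ ∧ l = ⟨i, m⟩ ∧ inc i a m) ∨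
    (∃ (j : I) (m : Lf j), p = ⟨j + 1, (φ j).toPoints m⟩ ∧ l = ⟨j, m⟩)

/-- The composite `φ_{n-1} ∘ ⋯ ∘ φ_1 ∘ φ_0` acting on the elements of `M₀`. -/
def corrChain {I : Type*} [CommRing I] {P Lf : I → Type*} (inc : ∀ i, P i → Lf i → Prop)
    (φ : ∀ i, Correlation (inc i) (inc (i + 1))) :
    (n : ℕ) → (P 0 ⊕ Lf 0) → (P (n : I) ⊕ Lf (n : I))
  | 0 => cast (by rw [Nat.cast_zero])
  | n + 1 => fun x =>
      cast (by rw [Nat.cast_add_one])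
        (Sum.elim (fun a => Sum.inr ((φ (n : I)).toLines a))
          (fun m => Sum.inl ((φ (n : I)).toPoints m)) (corrChain inc φ n x))

/-- The correlative multiplying `⊛_k(κ₀, M₀)`. -/
def corInc {S L : Type*} (k : ℕ) (inc0 : S → L → Prop) (kap : L → S) :
    ZMod k × S → ZMod k × L → Prop :=
  fun p l => (p.1 = l.1 ∧ inc0 p.2 l.2) ∨ (p.1 = l.1 + 1 ∧ p.2 = kap l.2)

namespace Correlation

variable {P₀ L₀ P₁ L₁ : Type*} {inc₀ : P₀ → L₀ → Prop} {inc₁ : P₁ → L₁ → Prop}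
  (φ : Correlation inc₀ inc₁)

def sumEquiv : P₀ ⊕ L₀ ≃ P₁ ⊕ L₁ :=
  (Equiv.sumCongr φ.toLines φ.toPoints).trans (Equiv.sumComm _ _)

@[simp]
lemma sumEquiv_inl (a : P₀) : φ.sumEquiv (.inl a) = .inr (φ.toLines a) := rfl

@[simp]
lemma sumEquiv_inr (l : L₀) : φ.sumEquiv (.inr l) = .inl (φ.toPoints l) := rfl

lemma isLeft_sumEquiv (x : P₀ ⊕ L₀) : (φ.sumEquiv x).isLeft = !x.isLeft := by
  cases x <;> rfl

lemma dualInc_sumEquiv (x y : P₀ ⊕ L₀) :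
    dualInc inc₁ (φ.sumEquiv x) (φ.sumEquiv y) ↔ dualInc inc₀ x y := by
  cases x <;> cases y <;> simp [dualInc, φ.rev]

end Correlation

namespace Equiv

variable {ι : Type*} {α β : ι → Type*}

def sigmaSumIsLeft : {e : Σ i, α i ⊕ β i // e.2.isLeft} ≃ Σ i, α i :=
  ((sigmaSumDistrib α β).subtypeEquiv fun ⟨_, y⟩ => by cases y <;> rfl).trans sumIsLeft

def sigmaSumIsRight : {e : Σ i, α i ⊕ β i // e.2.isRight} ≃ Σ i, β i :=
  ((sigmaSumDistrib α β).subtypeEquiv fun ⟨_, y⟩ => by cases y <;> rfl).trans sumIsRight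

end Equiv

lemma forall_of_intCast_surjective {R : Type*} [Ring R]
    (hR : Function.Surjective (Int.cast : ℤ → R)) {Q : R → Prop} (zero : Q 0)
    (step : ∀ r, Q r ↔ Q (r + 1)) (r : R) : Q r := by
  obtain ⟨n, rfl⟩ := hR r
  induction n using Int.induction_on with
  | zero => simpa using zero
  | succ n ih => simpa using (step _).mp ih
  | pred n ih => exact (step _).mpr (by simpa using ih)

lemma ZMod.even_intCast_iff {k : ℕ} (hk : Even k) (n : ℤ) : Even (n : ZMod k) ↔ Even n := by
  refine ⟨fun ⟨r, hr⟩ => ?_, fun h => h.map (Int.castRingHom _)⟩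
  obtain ⟨m, rfl⟩ := ZMod.intCast_surjective r
  have hdvd : (k : ℤ) ∣ m + m - n :=
    (ZMod.intCast_eq_intCast_iff_dvd_sub _ _ _).mp (by push_cast; exact hr)
  have : (2 : ℤ) ∣ m + m - n := (Int.natCast_dvd_natCast.mpr hk.two_dvd).trans hdvd
  rw [even_iff_two_dvd]
  omega

lemma ZMod.even_add_one_iff {k : ℕ} (hk : Even k) (i : ZMod k) : Even (i + 1) ↔ ¬ Even i := by
  obtain ⟨n, rfl⟩ := ZMod.intCast_surjective i
  rw [← Int.cast_one, ← Int.cast_add, even_intCast_iff hk, even_intCast_iff hk, Int.even_add_one]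

lemma mem_starPt_iff {G : Type*} [CommRing G] {S L : Type*} (p : G × (S ⊕ L)) :
    p ∈ starPt G S L ↔ (p.2.isLeft ↔ Even p.1) := by
  obtain ⟨i, a | l⟩ := p <;> by_cases Even i <;> simp [starPt, *]

lemma mem_starLn_iff {G : Type*} [CommRing G] {S L : Type*} (p : G × (S ⊕ L)) :
    p ∈ starLn G S L ↔ (p.2.isRight ↔ Even p.1) := by
  obtain ⟨i, a | l⟩ := p <;> by_cases Even i <;> simp [starLn, *]

section Fibre

variable {I : Type*} {P Lf : I → Type*} {inc : ∀ i, P i → Lf i → Prop}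

def fibreInc (inc : ∀ i, P i → Lf i → Prop) (e e' : Σ i, P i ⊕ Lf i) : Prop :=
  ∃ i y y', e = ⟨i, y⟩ ∧ e' = ⟨i, y'⟩ ∧ dualInc (inc i) y y'

lemma fibreInc_mk {i : I} {y y' : P i ⊕ Lf i} :
    fibreInc inc ⟨i, y⟩ ⟨i, y'⟩ ↔ dualInc (inc i) y y' := by
  refine ⟨?_, fun h => ⟨i, y, y', rfl, rfl, h⟩⟩
  rintro ⟨j, z, z', h, h', hz⟩
  cases h
  cases h'
  exact hz

lemma fibreInc.fst_eq {e e' : Σ i, P i ⊕ Lf i} (h : fibreInc inc e e') : e.1 = e'.1 := by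
  obtain ⟨i, y, y', rfl, rfl, -⟩ := h
  rfl

lemma isLeft_congr {e e' : Σ i, P i ⊕ Lf i} (h : e = e') : e.2.isLeft = e'.2.isLeft :=
  congrArg (fun e : Σ i, P i ⊕ Lf i => e.2.isLeft) h

end Fibre

section Glue

variable {I : Type*} [CommRing I] {P Lf : I → Type*} {inc : ∀ i, P i → Lf i → Prop}
  (φ : ∀ i, Correlation (inc i) (inc (i + 1)))

def glueShift : Equiv.Perm (Σ i, P i ⊕ Lf i) :=
  Equiv.sigmaCongr (Equiv.addRight 1) fun i => (φ i).sumEquiv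

@[simp]
lemma glueShift_mk (i : I) (y : P i ⊕ Lf i) : glueShift φ ⟨i, y⟩ = ⟨i + 1, (φ i).sumEquiv y⟩ :=
  rfl

lemma fst_glueShift (e : Σ i, P i ⊕ Lf i) : (glueShift φ e).1 = e.1 + 1 := rfl

lemma isLeft_glueShift (e : Σ i, P i ⊕ Lf i) : (glueShift φ e).2.isLeft = !e.2.isLeft :=
  (φ e.1).isLeft_sumEquiv e.2

lemma fst_glueShift_zpow (n : ℤ) (e : Σ i, P i ⊕ Lf i) : ((glueShift φ ^ n) e).1 = e.1 + n := by
  induction n using Int.induction_on generalizing e with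
  | zero => simp
  | succ n ih =>
    rw [add_comm, zpow_one_add, Equiv.Perm.mul_apply, fst_glueShift, ih]
    push_cast
    ring
  | pred n ih =>
    have h : ((glueShift φ)⁻¹ e).1 + 1 = e.1 :=
      congrArg Sigma.fst ((glueShift φ).apply_symm_apply e)
    rw [zpow_sub_one, Equiv.Perm.mul_apply, ih]
    push_cast
    linear_combination h

lemma fibreInc_glueShift (e e' : Σ i, P i ⊕ Lf i) :
    fibreInc inc (glueShift φ e) (glueShift φ e') ↔ fibreInc inc e e' := by
  obtain ⟨i, y⟩ := e
  obtain ⟨j, y'⟩ := e'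
  by_cases h : i = j
  · subst h
    simp only [glueShift_mk, fibreInc_mk, Correlation.dualInc_sumEquiv]
  · exact iff_of_false (fun hf => h (add_right_cancel hf.fst_eq)) (fun hf => h hf.fst_eq)

lemma glueInc_iff (a : Σ i, P i) (l : Σ i, Lf i) :
    glueInc inc φ a l ↔ fibreInc inc ⟨a.1, .inl a.2⟩ ⟨l.1, .inr l.2⟩ ∨
      (⟨a.1, .inl a.2⟩ : Σ i, P i ⊕ Lf i) = glueShift φ ⟨l.1, .inr l.2⟩ := by
  obtain ⟨i, a⟩ := a
  obtain ⟨j, m⟩ := l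
  refine or_congr ⟨?_, fun h => ?_⟩ ⟨?_, fun h => ?_⟩
  · rintro ⟨i', a', m', h₁, h₂, h⟩
    cases h₁
    cases h₂
    exact fibreInc_mk.mpr h
  · obtain rfl : i = j := h.fst_eq
    exact ⟨i, a, m, rfl, rfl, fibreInc_mk.mp h⟩
  · rintro ⟨j', m', h₁, h₂⟩
    cases h₂
    cases h₁
    rfl
  · cases h
    exact ⟨j, m, rfl, rfl⟩

/-- `φ_{k-1} ∘ ⋯ ∘ φ_0 = id`, phrased for every `n` that vanishes in `I`. -/
def TrivialMonodromy : Prop :=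
  ∀ n : ℤ, (n : I) = 0 → ∀ x : P 0 ⊕ Lf 0, (glueShift φ ^ n) ⟨0, x⟩ = ⟨0, x⟩

lemma glueShift_pow_mk_zero (n : ℕ) (x : P 0 ⊕ Lf 0) :
    (glueShift φ ^ n) ⟨0, x⟩ = ⟨n, corrChain inc φ n x⟩ := by
  induction n with
  | zero => exact Sigma.ext Nat.cast_zero.symm (cast_heq _ x).symm
  | succ n ih =>
    rw [pow_succ', Equiv.Perm.mul_apply, ih, glueShift_mk]
    refine Sigma.ext (Nat.cast_succ n).symm (HEq.symm ((cast_heq _ _).trans ?_))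
    cases corrChain inc φ n x <;> rfl

lemma trivialMonodromy_of_corrChain {k : ℕ} {P Lf : ZMod k → Type*}
    {inc : ∀ i, P i → Lf i → Prop} (φ : ∀ i, Correlation (inc i) (inc (i + 1)))
    (hchain : ∀ x : P 0 ⊕ Lf 0, corrChain inc φ k x = cast (by rw [ZMod.natCast_self]) x) :
    TrivialMonodromy φ := by
  intro n hn x
  obtain ⟨m, rfl⟩ := (ZMod.intCast_zmod_eq_zero_iff_dvd n k).mp hn
  have hk : (glueShift φ ^ k) ⟨0, x⟩ = ⟨0, x⟩ := by
    rw [glueShift_pow_mk_zero, hchain]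
    exact Sigma.ext (ZMod.natCast_self k) (cast_heq _ x)
  rw [zpow_mul, zpow_natCast]
  exact Equiv.Perm.zpow_apply_eq_self_of_apply_eq_self hk m

lemma trivialMonodromy_int {P Lf : ℤ → Type*} {inc : ∀ i, P i → Lf i → Prop}
    (φ : ∀ i, Correlation (inc i) (inc (i + 1))) : TrivialMonodromy φ := by
  intro n hn x
  rw [Int.cast_id] at hn
  rw [hn, zpow_zero, Equiv.Perm.one_apply]

variable (hI : Function.Surjective (Int.cast : ℤ → I))

/-- Which integer lift of `p.1` is used does not matter once the monodromy is trivial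
(`glueChart_intCast`). -/
noncomputable def glueChart (p : I × (P 0 ⊕ Lf 0)) : Σ i, P i ⊕ Lf i :=
  (glueShift φ ^ Function.surjInv hI p.1) ⟨0, p.2⟩

lemma fst_glueChart (p : I × (P 0 ⊕ Lf 0)) : (glueChart φ hI p).1 = p.1 := by
  simp [glueChart, fst_glueShift_zpow, Function.surjInv_eq hI]

lemma glueChart_bijective : Function.Bijective (glueChart φ hI) := by
  refine ⟨fun ⟨i, x⟩ ⟨j, y⟩ h => ?_, fun ⟨i, y⟩ => ?_⟩
  · obtain rfl : i = j := by simpa [fst_glueChart] using congrArg Sigma.fst h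
    cases (glueShift φ ^ _).injective h
    rfl
  · set g := glueShift φ ^ Function.surjInv hI i
    have h0 : (g⁻¹ ⟨i, y⟩).1 = 0 := by
      rw [← zpow_neg, fst_glueShift_zpow, Int.cast_neg, Function.surjInv_eq hI, add_neg_cancel]
    generalize he : g⁻¹ ⟨i, y⟩ = e at h0
    obtain ⟨j, x⟩ := e
    obtain rfl : j = 0 := h0
    refine ⟨(i, x), ?_⟩
    rw [glueChart, ← he]
    exact g.apply_symm_apply _

variable {φ}

lemma glueChart_intCast (hφ : TrivialMonodromy φ) (n : ℤ) (x : P 0 ⊕ Lf 0) :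
    glueChart φ hI (n, x) = (glueShift φ ^ n) ⟨0, x⟩ := by
  set m := Function.surjInv hI (n : I)
  have hmn : ((m - n : ℤ) : I) = 0 := by
    rw [Int.cast_sub, Function.surjInv_eq hI, sub_self]
  calc (glueShift φ ^ m) ⟨0, x⟩ = (glueShift φ ^ n * glueShift φ ^ (m - n)) ⟨0, x⟩ := by
        rw [← zpow_add, add_sub_cancel]
    _ = (glueShift φ ^ n) ⟨0, x⟩ := by rw [Equiv.Perm.mul_apply, hφ _ hmn]

lemma glueChart_zero (hφ : TrivialMonodromy φ) (x : P 0 ⊕ Lf 0) :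
    glueChart φ hI (0, x) = ⟨0, x⟩ := by
  simpa using glueChart_intCast hI hφ 0 x

lemma glueChart_add_one (hφ : TrivialMonodromy φ) (i : I) (x : P 0 ⊕ Lf 0) :
    glueChart φ hI (i + 1, x) = glueShift φ (glueChart φ hI (i, x)) := by
  obtain ⟨n, rfl⟩ := hI i
  rw [← Int.cast_one, ← Int.cast_add, glueChart_intCast hI hφ, glueChart_intCast hI hφ, add_comm,
    zpow_one_add, Equiv.Perm.mul_apply]

lemma fibreInc_glueChart (hφ : TrivialMonodromy φ) (i : I) (x y : P 0 ⊕ Lf 0) :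
    fibreInc inc (glueChart φ hI (i, x)) (glueChart φ hI (i, y)) ↔ dualInc (inc 0) x y := by
  refine forall_of_intCast_surjective hI (Q := fun i => ∀ x y,
    fibreInc inc (glueChart φ hI (i, x)) (glueChart φ hI (i, y)) ↔ dualInc (inc 0) x y)
    (fun x y => ?_) (fun i => ?_) i x y
  · rw [glueChart_zero hI hφ, glueChart_zero hI hφ, fibreInc_mk]
  · simp only [glueChart_add_one hI hφ, fibreInc_glueShift]

lemma isLeft_glueChart (hφ : TrivialMonodromy φ)
    (hEven : ∀ i : I, Even (i + 1) ↔ ¬ Even i) (p : I × (P 0 ⊕ Lf 0)) :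
    (glueChart φ hI p).2.isLeft ↔ (p.2.isLeft ↔ Even p.1) := by
  refine forall_of_intCast_surjective hI (Q := fun i => ∀ x,
    (glueChart φ hI (i, x)).2.isLeft ↔ (x.isLeft ↔ Even i)) (fun x => ?_) (fun i => ?_) p.1 p.2
  · simp [isLeft_congr (glueChart_zero hI hφ x)]
  · refine forall_congr' fun x => ?_
    rw [isLeft_congr (glueChart_add_one hI hφ i x), isLeft_glueShift, hEven]
    cases (glueChart φ hI (i, x)).2.isLeft <;> simp <;> tauto

lemma starInc_iff (hφ : TrivialMonodromy φ) (p : starPt I (P 0) (Lf 0))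
    (l : starLn I (P 0) (Lf 0)) :
    starInc I (inc 0) p l ↔ fibreInc inc (glueChart φ hI p) (glueChart φ hI l) ∨
      glueChart φ hI p = glueShift φ (glueChart φ hI l) := by
  obtain ⟨⟨i, x⟩, -⟩ := p
  obtain ⟨⟨j, y⟩, -⟩ := l
  refine or_congr ⟨?_, fun h => ?_⟩ ?_
  · rintro ⟨rfl, h⟩
    exact (fibreInc_glueChart hI hφ i x y).mpr h
  · obtain rfl : i = j := by simpa [fst_glueChart] using h.fst_eq
    exact ⟨rfl, (fibreInc_glueChart hI hφ i x y).mp h⟩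
  · rw [← glueChart_add_one hI hφ, (glueChart_bijective φ hI).injective.eq_iff, Prod.mk.injEq]

theorem glueInc_iso_starInc (hI : Function.Surjective (Int.cast : ℤ → I))
    (hφ : TrivialMonodromy φ) (hEven : ∀ i : I, Even (i + 1) ↔ ¬ Even i) :
    Nonempty (IncIso (glueInc inc φ) (starInc I (inc 0))) := by
  let Φ := Equiv.ofBijective _ (glueChart_bijective φ hI)
  have hpt (p : I × (P 0 ⊕ Lf 0)) : p ∈ starPt I (P 0) (Lf 0) ↔ (Φ p).2.isLeft := by
    rw [mem_starPt_iff, Equiv.ofBijective_apply, isLeft_glueChart hI hφ hEven]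
  have hln (p : I × (P 0 ⊕ Lf 0)) : p ∈ starLn I (P 0) (Lf 0) ↔ (Φ p).2.isRight := by
    rw [mem_starLn_iff, Equiv.ofBijective_apply, ← Sum.not_isLeft, ← Sum.not_isLeft,
      isLeft_glueChart hI hφ hEven]
    tauto
  refine ⟨⟨Equiv.sigmaSumIsLeft.symm.trans (Φ.subtypeEquiv hpt).symm,
    Equiv.sigmaSumIsRight.symm.trans (Φ.subtypeEquiv hln).symm, fun a l => ?_⟩⟩
  rw [glueInc_iff, starInc_iff hI hφ]
  simp only [Equiv.trans_apply, Equiv.subtypeEquiv_symm, Equiv.subtypeEquiv_apply]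
  simp only [Φ, Equiv.ofBijective_apply_symm_apply]
  exact Iff.rfl

end Glue

/-- (i) for `I = ℤ`, `⊛_{i∈ℤ}(M_i, φ_i) ≅ ⊛_ℤ(∘, M₀)`;
(ii) for `I = C_k` with `k` even and `φ_{k-1} ∘ ⋯ ∘ φ_1 ∘ φ_0 = id`,
`⊛_{i∈C_k}(M_i, φ_i) ≅ ⊛_{C_k}(∘, M₀)`. -/
theorem glue_iso_star :
    (∀ (P Lf : ℤ → Type) (inc : ∀ i, P i → Lf i → Prop),
      (∀ i, IsPLS (inc i)) → (∀ i, ConnectedPLS (inc i)) →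
      ∀ φ : ∀ i, Correlation (inc i) (inc (i + 1)),
        Nonempty (IncIso (glueInc inc φ) (starInc ℤ (inc 0)))) ∧
    (∀ (k : ℕ), 0 < k → Even k →
      ∀ (P Lf : ZMod k → Type) (inc : ∀ i, P i → Lf i → Prop),
      (∀ i, IsPLS (inc i)) → (∀ i, ConnectedPLS (inc i)) →
      ∀ φ : ∀ i, Correlation (inc i) (inc (i + 1)),
        (∀ x : P 0 ⊕ Lf 0, corrChain inc φ k x = cast (by rw [ZMod.natCast_self]) x) →
        Nonempty (IncIso (glueInc inc φ) (starInc (ZMod k) (inc 0)))) := by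
  refine ⟨fun P Lf inc _ _ φ => ?_, fun k _ hk P Lf inc _ _ φ hchain => ?_⟩
  · exact glueInc_iso_starInc (fun n => ⟨n, Int.cast_id⟩) (trivialMonodromy_int φ)
      fun _ => Int.even_add_one
  · exact glueInc_iso_starInc ZMod.intCast_surjective (trivialMonodromy_of_corrChain φ hchain)
      (ZMod.even_add_one_iff hk)
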